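/- arXiv:1911.09200 — 5 statements merged into one kernel-verified Lean document; each statement's English description precedes it below -/
import Mathlib

section
/- Let p_1,...,p_n be independent real random variables each super-uniform on [0,1], let f : [0,1]^n → ℝ be measurable and coordinatewise nondecreasing, and let u_1,...,u_n be i.i.d. Uniform[0,1]. Define F(c) = P(f(u_1,...,u_n) ≤ c). Then F(f(p_1,...,p_n)) is super-uniform: P(F(f(p)) ≤ c) ≤ c for all c ∈ [0,1]. -/
open MeasureTheory ProbabilityTheory
open scoped ENNReal NNReal

section Aux

open Set

private lemma my_measure_Iio (ν : Measure ℝ) (a : ℝ) :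
    ν (Iio a) = ⨆ k : ℕ, ν (Iic (a - 1/(k+1))) := by
  have hU : Iio a = ⋃ k : ℕ, Iic (a - 1/(k+1)) := by
    ext x
    simp only [mem_Iio, mem_iUnion, mem_Iic]
    constructor
    · intro hx
      obtain ⟨k, hk⟩ := exists_nat_one_div_lt (sub_pos.2 hx)
      exact ⟨k, by linarith⟩
    · rintro ⟨k, hk⟩
      have : (0:ℝ) < 1/(k+1) := by positivity
      linarith
  have hmono : Monotone (fun k : ℕ => Iic (a - 1/(k+1 : ℝ))) := by
    intro i j hij
    apply Iic_subset_Iic.2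
    have h1 : (0:ℝ) < (i:ℝ) + 1 := by positivity
    have h2 : (i:ℝ) + 1 ≤ (j:ℝ) + 1 := by exact_mod_cast by omega
    have := one_div_le_one_div_of_le h1 h2
    linarith
  rw [hU, (hmono.directed_le).measure_iUnion]

private lemma my_lower_dom (ν ν' : Measure ℝ) [IsProbabilityMeasure ν] [IsProbabilityMeasure ν']
    (h : ∀ t, ν (Iic t) ≤ ν' (Iic t)) {L : Set ℝ} (hL : IsLowerSet L) : ν L ≤ ν' L := by
  rcases L.eq_empty_or_nonempty with rfl | hne
  · simp
  by_cases hb : BddAbove L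
  · by_cases ha : sSup L ∈ L
    · have hLe : L = Iic (sSup L) :=
        subset_antisymm (fun x hx => le_csSup hb hx) (fun x hx => hL hx ha)
      rw [hLe]; exact h _
    · have hLe : L = Iio (sSup L) := by
        ext x
        constructor
        · intro hx
          exact lt_of_le_of_ne (le_csSup hb hx) (fun hxe => ha (hxe ▸ hx))
        · intro hx
          obtain ⟨y, hy, hxy⟩ := exists_lt_of_lt_csSup hne hx
          exact hL hxy.le hy
      rw [hLe, my_measure_Iio, my_measure_Iio]
      exact iSup_mono fun k => h _
  · have hLe : L = univ := by
      ext x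
      simp only [mem_univ, iff_true]
      obtain ⟨y, hy, hxy⟩ := not_bddAbove_iff.1 hb x
      exact hL hxy.le hy
    rw [hLe]
    simp

private lemma my_lintegral_dom (ν ν' : Measure ℝ) [IsProbabilityMeasure ν]
    [IsProbabilityMeasure ν']
    (h : ∀ t, ν (Iic t) ≤ ν' (Iic t)) {g : ℝ → ℝ≥0∞} (hg : Antitone g) (hg1 : ∀ x, g x ≤ 1) :
    ∫⁻ x, g x ∂ν ≤ ∫⁻ x, g x ∂ν' := by
  have hfin : ∀ x, g x ≠ ∞ := fun x => (lt_of_le_of_lt (hg1 x) ENNReal.one_lt_top).ne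
  have hgr : Antitone (fun x => (g x).toReal) :=
    fun a b hab => ENNReal.toReal_mono (hfin a) (hg hab)
  have hmeas : Measurable fun x => (g x).toReal := hgr.measurable
  have hrepr : ∀ x, g x = ENNReal.ofReal ((g x).toReal) :=
    fun x => (ENNReal.ofReal_toReal (hfin x)).symm
  have hnn : ∀ x, 0 ≤ (g x).toReal := fun x => ENNReal.toReal_nonneg
  calc ∫⁻ x, g x ∂ν = ∫⁻ x, ENNReal.ofReal ((g x).toReal) ∂ν := by
        simp_rw [← hrepr]
    _ = ∫⁻ t in Ioi 0, ν {a | t < (g a).toReal} :=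
        lintegral_eq_lintegral_meas_lt ν (Filter.Eventually.of_forall hnn) hmeas.aemeasurable
    _ ≤ ∫⁻ t in Ioi 0, ν' {a | t < (g a).toReal} := by
        refine lintegral_mono fun t => ?_
        refine my_lower_dom ν ν' h ?_
        intro a b hab hbmem
        exact lt_of_lt_of_le hbmem (hgr hab)
    _ = ∫⁻ x, ENNReal.ofReal ((g x).toReal) ∂ν' :=
        (lintegral_eq_lintegral_meas_lt ν' (Filter.Eventually.of_forall hnn)
          hmeas.aemeasurable).symm
    _ = ∫⁻ x, g x ∂ν' := by simp_rw [← hrepr]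

private lemma my_pi_dom : ∀ (n : ℕ) (ν ν' : Fin n → Measure ℝ),
    (∀ i, IsProbabilityMeasure (ν i)) → (∀ i, IsProbabilityMeasure (ν' i)) →
    (∀ i t, ν i (Iic t) ≤ ν' i (Iic t)) → ∀ {A : Set (Fin n → ℝ)},
    IsLowerSet A → MeasurableSet A → Measure.pi ν A ≤ Measure.pi ν' A := by
  intro n
  induction n with
  | zero =>
    intro ν ν' hp hp' _ A hA hAm
    haveI := hp; haveI := hp'
    rcases A.eq_empty_or_nonempty with rfl | hne
    · simp
    · have : A = univ := hne.eq_univ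
      rw [this, measure_univ, measure_univ]
  | succ n IH =>
    intro ν ν' hp hp' hdom A hA hAm
    haveI := hp; haveI := hp'
    set e := MeasurableEquiv.piFinSuccAbove (fun _ : Fin (n+1) => ℝ) 0 with he
    have hBm : MeasurableSet (e.symm ⁻¹' A) := e.symm.measurable hAm
    have hsymm : ∀ (x : ℝ) (y : Fin n → ℝ), e.symm (x, y) = Fin.cons x (fun j => y j) := by
      intro x y
      simp [he, MeasurableEquiv.piFinSuccAbove_symm_apply, Fin.insertNthEquiv,
        Fin.insertNth_zero]
    have key : ∀ (m : Fin (n+1) → Measure ℝ), (∀ i, IsProbabilityMeasure (m i)) →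
        Measure.pi m A
          = ∫⁻ x, Measure.pi (fun j => m ((0:Fin (n+1)).succAbove j))
              {y : Fin n → ℝ | (Fin.cons x y : Fin (n+1) → ℝ) ∈ A} ∂(m 0) := by
      intro m hm
      haveI := hm
      have hmp := measurePreserving_piFinSuccAbove m 0
      have h1 : Measure.pi m A
          = ((m 0).prod (Measure.pi fun j => m ((0:Fin (n+1)).succAbove j)))
              (e.symm ⁻¹' A) := by
        rw [← hmp.map_eq, Measure.map_apply e.measurable hBm]
        congr 1
        ext z
        simp [Set.preimage_preimage]
      rw [h1, Measure.prod_apply hBm]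
      refine lintegral_congr fun x => ?_
      congr 1
      ext y
      simp only [mem_setOf_eq, mem_preimage]
      rw [hsymm x y]
    have cons_mono : ∀ (x x' : ℝ) (y y' : Fin n → ℝ), x ≤ x' → y ≤ y' →
        (Fin.cons x y : Fin (n+1) → ℝ) ≤ Fin.cons x' y' := by
      intro x x' y y' hx hy i
      refine Fin.cases ?_ ?_ i
      · simpa using hx
      · intro j; simpa using hy j
    have hconsm : ∀ x : ℝ, Measurable (fun y : Fin n → ℝ => (Fin.cons x y : Fin (n+1) → ℝ)) := by
      intro x
      rw [measurable_pi_iff]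
      intro i
      refine Fin.cases ?_ ?_ i
      · simpa using measurable_const
      · intro j; simpa using measurable_pi_apply j
    have hSlower : ∀ x : ℝ, IsLowerSet {y : Fin n → ℝ | (Fin.cons x y : Fin (n+1) → ℝ) ∈ A} :=
      fun x y y' hyy' hy' => hA (cons_mono x x y' y le_rfl hyy') hy'
    have hSm : ∀ x : ℝ, MeasurableSet {y : Fin n → ℝ | (Fin.cons x y : Fin (n+1) → ℝ) ∈ A} :=
      fun x => (hconsm x) hAm
    have hanti : Antitone (fun x : ℝ => Measure.pi (fun j => ν' ((0:Fin (n+1)).succAbove j))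
        {y : Fin n → ℝ | (Fin.cons x y : Fin (n+1) → ℝ) ∈ A}) := by
      intro x x' hxx'
      refine measure_mono fun y hy => ?_
      exact hA (cons_mono x x' y y hxx' le_rfl) hy
    haveI htail : ∀ j, IsProbabilityMeasure (ν ((0:Fin (n+1)).succAbove j)) := fun j => hp _
    haveI htail' : ∀ j, IsProbabilityMeasure (ν' ((0:Fin (n+1)).succAbove j)) := fun j => hp' _
    calc Measure.pi ν A
        = ∫⁻ x, Measure.pi (fun j => ν ((0:Fin (n+1)).succAbove j))
            {y : Fin n → ℝ | (Fin.cons x y : Fin (n+1) → ℝ) ∈ A} ∂(ν 0) := key ν hp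
      _ ≤ ∫⁻ x, Measure.pi (fun j => ν' ((0:Fin (n+1)).succAbove j))
            {y : Fin n → ℝ | (Fin.cons x y : Fin (n+1) → ℝ) ∈ A} ∂(ν 0) := by
          refine lintegral_mono fun x => ?_
          exact IH _ _ htail htail' (fun j t => hdom _ t) (hSlower x) (hSm x)
      _ ≤ ∫⁻ x, Measure.pi (fun j => ν' ((0:Fin (n+1)).succAbove j))
            {y : Fin n → ℝ | (Fin.cons x y : Fin (n+1) → ℝ) ∈ A} ∂(ν' 0) :=
          my_lintegral_dom (ν 0) (ν' 0) (fun t => hdom 0 t) hanti fun x => prob_le_one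
      _ = Measure.pi ν' A := (key ν' hp').symm

end Aux

/-- If `p 1, ..., p n` are independent super-uniform random variables, `f` is measurable and
coordinatewise nondecreasing, and `F` is the CDF of `f` applied to i.i.d. Uniform[0,1]
random variables, then `F(f(p))` is super-uniform. -/
theorem stmt1
    {Ω : Type*} [MeasurableSpace Ω] (μ : Measure Ω) [IsProbabilityMeasure μ]
    (n : ℕ) (p u : Fin n → Ω → ℝ)
    (hpmeas : ∀ i, Measurable (p i))
    (hpindep : iIndepFun p μ)
    (hpsuper : ∀ i, ∀ c ∈ Set.Icc (0 : ℝ) 1, μ {ω | p i ω ≤ c} ≤ ENNReal.ofReal c)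
    (humeas : ∀ i, Measurable (u i))
    (huindep : iIndepFun u μ)
    (hunif : ∀ i, μ.map (u i) = (volume : Measure ℝ).restrict (Set.Icc 0 1))
    (f : (Fin n → ℝ) → ℝ) (hf : Measurable f) (hmono : Monotone f)
    (F : ℝ → ℝ≥0∞)
    (hF : ∀ c, F c = μ {ω | f (fun i => u i ω) ≤ c}) :
    ∀ c ∈ Set.Icc (0 : ℝ) 1,
      μ {ω | F (f (fun i => p i ω)) ≤ ENNReal.ofReal c} ≤ ENNReal.ofReal c := by
  -- joint law equals product of marginals
  have hjoint : ∀ (v : Fin n → Ω → ℝ), (∀ i, Measurable (v i)) →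
      iIndepFun v μ →
      μ.map (fun ω i => v i ω) = Measure.pi (fun i => μ.map (v i)) := by
    intro v hv hvi
    haveI : ∀ i, IsProbabilityMeasure (μ.map (v i)) :=
      fun i => Measure.isProbabilityMeasure_map (hv i).aemeasurable
    refine (Measure.pi_eq fun s hs => ?_).symm
    rw [Measure.map_apply (measurable_pi_lambda _ hv) (MeasurableSet.univ_pi hs)]
    have hpre : (fun ω i => v i ω) ⁻¹' Set.pi Set.univ s = ⋂ i ∈ Finset.univ, v i ⁻¹' s i := by
      ext ω; simp [Set.mem_pi]
    rw [hpre, hvi.measure_inter_preimage_eq_mul Finset.univ (fun i _ => hs i)]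
    exact Finset.prod_congr rfl fun i _ => (Measure.map_apply (hv i) (hs i)).symm
  haveI hIPp : ∀ i, IsProbabilityMeasure (μ.map (p i)) :=
    fun i => Measure.isProbabilityMeasure_map (hpmeas i).aemeasurable
  haveI hIPu : ∀ i, IsProbabilityMeasure (μ.map (u i)) :=
    fun i => Measure.isProbabilityMeasure_map (humeas i).aemeasurable
  -- CDF dominance of the marginals
  have hdom : ∀ i t, (μ.map (p i)) (Set.Iic t) ≤ (μ.map (u i)) (Set.Iic t) := by
    intro i t
    rw [Measure.map_apply (hpmeas i) measurableSet_Iic, hunif i,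
      Measure.restrict_apply measurableSet_Iic]
    by_cases h0 : t < 0
    · refine le_trans ?_ zero_le
      have h1 : μ (p i ⁻¹' Set.Iic t) ≤ μ {ω | p i ω ≤ 0} :=
        measure_mono (fun ω hω => le_trans hω h0.le)
      have h2 := hpsuper i 0 ⟨le_rfl, zero_le_one⟩
      simpa using le_trans h1 h2
    · push_neg at h0
      by_cases h1 : t ≤ 1
      · have hIic : Set.Iic t ∩ Set.Icc (0:ℝ) 1 = Set.Icc 0 t := by
          ext x
          simp only [Set.mem_inter_iff, Set.mem_Iic, Set.mem_Icc]
          constructor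
          · rintro ⟨a, b, _⟩; exact ⟨b, a⟩
          · rintro ⟨a, b⟩; exact ⟨b, a, le_trans b h1⟩
        rw [hIic, Real.volume_Icc, sub_zero]
        exact hpsuper i t ⟨h0, h1⟩
      · push_neg at h1
        have hsub : Set.Icc (0:ℝ) 1 ⊆ Set.Iic t ∩ Set.Icc 0 1 :=
          fun x hx => ⟨le_trans hx.2 h1.le, hx⟩
        calc μ (p i ⁻¹' Set.Iic t) ≤ 1 := prob_le_one
          _ = volume (Set.Icc (0:ℝ) 1) := by rw [Real.volume_Icc]; norm_num
          _ ≤ volume (Set.Iic t ∩ Set.Icc (0:ℝ) 1) := measure_mono hsub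
  -- pointwise stochastic dominance of f(p) against f(u)
  have hstep : ∀ s : ℝ, μ {ω | f (fun i => p i ω) ≤ s} ≤ F s := by
    intro s
    have hA : MeasurableSet (f ⁻¹' Set.Iic s) := hf measurableSet_Iic
    have hAl : IsLowerSet (f ⁻¹' Set.Iic s) := fun a b hba hb => le_trans (hmono hba) hb
    have e1 : {ω | f (fun i => p i ω) ≤ s} = (fun ω i => p i ω) ⁻¹' (f ⁻¹' Set.Iic s) := rfl
    have e2 : {ω | f (fun i => u i ω) ≤ s} = (fun ω i => u i ω) ⁻¹' (f ⁻¹' Set.Iic s) := rfl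
    rw [e1, ← Measure.map_apply (measurable_pi_lambda _ hpmeas) hA,
      hjoint p hpmeas hpindep, hF s, e2,
      ← Measure.map_apply (measurable_pi_lambda _ humeas) hA, hjoint u humeas huindep]
    exact my_pi_dom n _ _ hIPp hIPu hdom hAl hA
  have hFmono : Monotone F := by
    intro a b hab
    rw [hF a, hF b]
    exact measure_mono (fun ω h => le_trans h hab)
  intro c _
  by_cases hgr : ∃ m, F m ≤ ENNReal.ofReal c ∧ ∀ s, F s ≤ ENNReal.ofReal c → s ≤ m
  · obtain ⟨m, hm, hmax⟩ := hgr
    have hE : {ω | F (f (fun i => p i ω)) ≤ ENNReal.ofReal c}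
        = {ω | f (fun i => p i ω) ≤ m} := by
      ext ω
      simp only [Set.mem_setOf_eq]
      exact ⟨fun h => hmax _ h, fun h => le_trans (hFmono h) hm⟩
    rw [hE]
    exact le_trans (hstep m) hm
  · push_neg at hgr
    have hsub : {ω | F (f (fun i => p i ω)) ≤ ENNReal.ofReal c}
        ⊆ ⋃ q : {q : ℚ // F (q:ℝ) ≤ ENNReal.ofReal c}, {ω | f (fun i => p i ω) ≤ (q:ℝ)} := by
      intro ω hω
      obtain ⟨s, hs, hms⟩ := hgr _ hω
      obtain ⟨q, hq1, hq2⟩ := exists_rat_btwn hms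
      exact Set.mem_iUnion.2 ⟨⟨q, le_trans (hFmono hq2.le) hs⟩, hq1.le⟩
    refine le_trans (measure_mono hsub) ?_
    have hdir : Directed (· ⊆ ·)
        (fun q : {q : ℚ // F (q:ℝ) ≤ ENNReal.ofReal c} =>
          {ω | f (fun i => p i ω) ≤ (q:ℝ)}) := by
      intro a b
      rcases le_total (a:ℚ) (b:ℚ) with hab | hba
      · refine ⟨b, fun ω h => ?_, fun ω h => h⟩
        simp only [Set.mem_setOf_eq] at h ⊢
        exact le_trans h (by exact_mod_cast hab)
      · refine ⟨a, fun ω h => h, fun ω h => ?_⟩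
        simp only [Set.mem_setOf_eq] at h ⊢
        exact le_trans h (by exact_mod_cast hba)
    rw [hdir.measure_iUnion]
    exact iSup_le fun q => le_trans (hstep _) q.2
end

section
/- Let Z ~ N(0, R) be an n-dimensional centered Gaussian vector where R is a correlation matrix, let π be a probability vector (nonnegative entries summing to 1), and let Y = ∑_i π_i Z_i. Then for every α ∈ [0,1], P(Φ(Y)·1{Y<0} + 1{Y≥0} ≤ α) ≤ α, i.e. the conservative Stouffer statistic p̃ defined as p̃ = 1 if Y ≥ 0 and p̃ = Φ(Y) otherwise is super-uniform. -/
open MeasureTheory ProbabilityTheory Matrix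
open scoped ENNReal NNReal BigOperators

/-- The standard normal CDF `Φ`. -/
noncomputable def stdGaussianCDF (x : ℝ) : ℝ := (gaussianReal 0 1 (Set.Iic x)).toReal

/-- The CDF transform of any finite measure is super-uniform. -/
lemma cdf_superuniform (ν : Measure ℝ) [IsFiniteMeasure ν] (α : ℝ) :
    ν {x | (ν (Set.Iic x)).toReal ≤ α} ≤ ENNReal.ofReal α := by
  set S := {x : ℝ | (ν (Set.Iic x)).toReal ≤ α} with hSdef
  rcases Set.eq_empty_or_nonempty S with h | hne
  · simp [h]
  obtain ⟨x₀, hx₀⟩ := hne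
  have key : ∀ x : ℝ, (∃ s ∈ S, x ≤ s) → ν (Set.Iic x) ≤ ENNReal.ofReal α := by
    rintro x ⟨s, hs, hxs⟩
    calc ν (Set.Iic x) ≤ ν (Set.Iic s) := measure_mono (Set.Iic_subset_Iic.2 hxs)
      _ ≤ ENNReal.ofReal α := by
          rw [← ENNReal.ofReal_toReal (measure_ne_top ν (Set.Iic s))]
          exact ENNReal.ofReal_le_ofReal hs
  by_cases hbdd : BddAbove S
  · by_cases htS : sSup S ∈ S
    · calc ν S ≤ ν (Set.Iic (sSup S)) := measure_mono (fun s hs => le_csSup hbdd hs)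
        _ ≤ ENNReal.ofReal α := key (sSup S) ⟨sSup S, htS, le_rfl⟩
    · set t := sSup S with ht
      have hSsub : S ⊆ Set.Iio t := by
        intro s hs
        rcases lt_or_eq_of_le (le_csSup hbdd hs) with h | h
        · exact h
        · rw [h] at hs; exact absurd hs htS
      have hunion : Set.Iio t = ⋃ n : ℕ, Set.Iic (t - 1/(n+1)) := by
        ext x
        simp only [Set.mem_Iio, Set.mem_iUnion, Set.mem_Iic]
        constructor
        · intro hx
          obtain ⟨n, hn⟩ := exists_nat_one_div_lt (sub_pos.2 hx)
          exact ⟨n, by linarith⟩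
        · rintro ⟨n, hn⟩
          have h1 : (0:ℝ) < 1/((n:ℝ)+1) := by positivity
          linarith
      have hmono : Monotone (fun n : ℕ => Set.Iic (t - 1/((n:ℝ)+1))) := by
        intro m n hmn
        apply Set.Iic_subset_Iic.2
        have hmn' : ((m:ℝ)) ≤ (n:ℝ) := Nat.cast_le.2 hmn
        have : 1/((n:ℝ)+1) ≤ 1/((m:ℝ)+1) :=
          one_div_le_one_div_of_le (by positivity) (by linarith)
        linarith
      calc ν S ≤ ν (Set.Iio t) := measure_mono hSsub
        _ = ⨆ n : ℕ, ν (Set.Iic (t - 1/(n+1))) := by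
            rw [hunion]; exact hmono.directed_le.measure_iUnion
        _ ≤ ENNReal.ofReal α := by
            apply iSup_le
            intro n
            have hlt : t - 1/((n:ℝ)+1) < t := by
              have : (0:ℝ) < 1/((n:ℝ)+1) := by positivity
              linarith
            obtain ⟨s, hs, hxs⟩ := exists_lt_of_lt_csSup ⟨x₀, hx₀⟩ hlt
            exact key _ ⟨s, hs, hxs.le⟩
  · have hSuniv : S = Set.univ := by
      apply Set.eq_univ_of_forall
      intro x
      obtain ⟨s, hs, hxs⟩ := not_bddAbove_iff.1 hbdd x
      exact le_trans (ENNReal.toReal_mono (measure_ne_top _ _)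
        (measure_mono (Set.Iic_subset_Iic.2 hxs.le))) hs
    have huniv : (Set.univ : Set ℝ) = ⋃ n : ℕ, Set.Iic (n:ℝ) := by
      ext x
      simp only [Set.mem_univ, Set.mem_iUnion, Set.mem_Iic, true_iff]
      exact exists_nat_ge x
    have hmono : Monotone (fun n : ℕ => Set.Iic ((n:ℝ))) :=
      fun m n hmn => Set.Iic_subset_Iic.2 (by exact_mod_cast hmn)
    calc ν S = ⨆ n : ℕ, ν (Set.Iic (n:ℝ)) := by
          rw [hSuniv, huniv]; exact hmono.directed_le.measure_iUnion
      _ ≤ ENNReal.ofReal α := by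
          apply iSup_le
          intro n
          exact key _ ⟨(n:ℝ), hSuniv ▸ Set.mem_univ _, le_rfl⟩

/-- Comparing Gaussian tails on the negative half line when the variance is at most 1. -/
lemma gaussian_Iic_le (v : ℝ≥0) (hv : v ≤ 1) {y : ℝ} (hy : y < 0) :
    gaussianReal 0 v (Set.Iic y) ≤ gaussianReal 0 1 (Set.Iic y) := by
  by_cases h0 : v = 0
  · rw [h0, gaussianReal_zero_var, Measure.dirac_apply' _ measurableSet_Iic]
    simp [Set.indicator, hy.not_ge]
  · have hvpos : (0:ℝ) < (v:ℝ) := by positivity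
    set c : ℝ := Real.sqrt v with hc
    have hc0 : 0 < c := Real.sqrt_pos.2 hvpos
    have hc1 : c ≤ 1 := Real.sqrt_le_one.2 (by exact_mod_cast hv)
    have hveq : (⟨c^2, sq_nonneg c⟩ : ℝ≥0) = v := by
      ext
      simp [hc, Real.sq_sqrt (le_of_lt hvpos)]
    have hmap : (gaussianReal 0 1).map (c * ·) = gaussianReal 0 v := by
      rw [gaussianReal_map_const_mul, mul_zero, mul_one]; exact congrArg _ hveq
    rw [← hmap, Measure.map_apply (measurable_const_mul c) measurableSet_Iic]
    have hpre : (fun x => c * x) ⁻¹' Set.Iic y = Set.Iic (y / c) := by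
      ext x
      simp only [Set.mem_preimage, Set.mem_Iic]
      rw [le_div_iff₀ hc0, mul_comm]
    rw [hpre]
    apply measure_mono (Set.Iic_subset_Iic.2 ?_)
    rw [div_le_iff₀ hc0]
    nlinarith

/-- Off-diagonal entries of a correlation matrix are at most 1. -/
lemma corr_entry_le_one {n : ℕ} (R : Matrix (Fin n) (Fin n) ℝ) (hpsd : R.PosSemidef)
    (hdiag : ∀ i, R i i = 1) (i j : Fin n) : R i j ≤ 1 := by
  have hsym : R j i = R i j := by
    have h := congrFun (congrFun hpsd.1 i) j
    simpa [Matrix.conjTranspose_apply] using h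
  have h := hpsd.dotProduct_mulVec_nonneg (Pi.single i 1 - Pi.single j 1 : Fin n → ℝ)
  simp only [star_trivial, Matrix.mulVec_sub, sub_dotProduct, dotProduct_sub,
    Matrix.mulVec_single_one, Matrix.col_apply, single_dotProduct, mul_one, one_mul] at h
  have hii := hdiag i
  have hjj := hdiag j
  linarith

/-- Conservative Stouffer smoothing: if `Z ~ N(0, R)` with `R` a correlation matrix
(characterized via linear combinations: every `⟨w, Z⟩` is `N(0, wᵀRw)`), `π` is a
probability vector and `Y = ∑ π i * Z i`, then the conservative Stouffer statistic
`p̃ = 1` if `Y ≥ 0` and `p̃ = Φ(Y)` otherwise is super-uniform. -/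
theorem stmt5
    {Ω : Type*} [MeasurableSpace Ω] (μ : Measure Ω) [IsProbabilityMeasure μ]
    (n : ℕ) (Z : Fin n → Ω → ℝ) (hmeas : ∀ i, Measurable (Z i))
    (R : Matrix (Fin n) (Fin n) ℝ) (hpsd : R.PosSemidef) (hdiag : ∀ i, R i i = 1)
    (hgauss : ∀ w : Fin n → ℝ,
      μ.map (fun ω => ∑ i, w i * Z i ω) = gaussianReal 0 (w ⬝ᵥ (R *ᵥ w)).toNNReal)
    (π : Fin n → ℝ) (hπ : ∀ i, 0 ≤ π i) (hsum : ∑ i, π i = 1)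
    (Y : Ω → ℝ) (hY : ∀ ω, Y ω = ∑ i, π i * Z i ω)
    (ptilde : Ω → ℝ)
    (hptilde : ∀ ω, ptilde ω = if 0 ≤ Y ω then 1 else stdGaussianCDF (Y ω)) :
    ∀ α ∈ Set.Icc (0 : ℝ) 1, μ {ω | ptilde ω ≤ α} ≤ ENNReal.ofReal α := by
  intro α hα
  obtain ⟨hα0, hα1⟩ := hα
  -- variance bound
  have hvar : π ⬝ᵥ (R *ᵥ π) ≤ 1 := by
    have hexp : π ⬝ᵥ (R *ᵥ π) = ∑ i, ∑ j, π i * (R i j * π j) := by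
      simp [dotProduct, Matrix.mulVec, Finset.mul_sum]
    rw [hexp]
    calc ∑ i, ∑ j, π i * (R i j * π j) ≤ ∑ i, ∑ j, π i * π j := by
          apply Finset.sum_le_sum
          intro i _
          apply Finset.sum_le_sum
          intro j _
          have h1 : R i j * π j ≤ π j := by
            nlinarith [corr_entry_le_one R hpsd hdiag i j, hπ j]
          exact mul_le_mul_of_nonneg_left h1 (hπ i)
      _ = 1 := by rw [← Finset.sum_mul_sum, hsum, mul_one]
  set v : ℝ≥0 := (π ⬝ᵥ (R *ᵥ π)).toNNReal with hv
  have hv1 : v ≤ 1 := by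
    rw [hv]
    exact Real.toNNReal_le_one.2 hvar
  have hYmeas : Measurable Y := by
    have : Y = fun ω => ∑ i, π i * Z i ω := funext hY
    rw [this]
    exact Finset.measurable_sum _ fun i _ => (hmeas i).const_mul (π i)
  have hmapY : μ.map Y = gaussianReal 0 v := by
    have : Y = fun ω => ∑ i, π i * Z i ω := funext hY
    rw [this, hgauss π]
  by_cases h1 : 1 ≤ α
  · calc μ {ω | ptilde ω ≤ α} ≤ μ Set.univ := measure_mono (Set.subset_univ _)
      _ = 1 := measure_univ
      _ ≤ ENNReal.ofReal α := by
          rw [← ENNReal.ofReal_one]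
          exact ENNReal.ofReal_le_ofReal h1
  push_neg at h1
  -- the CDF of gaussianReal 0 v
  set F : ℝ → ℝ := fun y => (gaussianReal 0 v (Set.Iic y)).toReal with hF
  have hFmono : Monotone F := fun a b hab =>
    ENNReal.toReal_mono (measure_ne_top _ _) (measure_mono (Set.Iic_subset_Iic.2 hab))
  have hTmeas : MeasurableSet {y : ℝ | F y ≤ α} :=
    hFmono.measurable measurableSet_Iic
  have hsub : {ω | ptilde ω ≤ α} ⊆ Y ⁻¹' {y : ℝ | F y ≤ α} := by
    intro ω hω
    simp only [Set.mem_setOf_eq, hptilde ω] at hω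
    split_ifs at hω with h
    · linarith
    · push_neg at h
      have hle : gaussianReal 0 v (Set.Iic (Y ω)) ≤ gaussianReal 0 1 (Set.Iic (Y ω)) :=
        gaussian_Iic_le v hv1 h
      have : F (Y ω) ≤ stdGaussianCDF (Y ω) :=
        ENNReal.toReal_mono (measure_ne_top _ _) hle
      exact le_trans this hω
  calc μ {ω | ptilde ω ≤ α} ≤ μ (Y ⁻¹' {y : ℝ | F y ≤ α}) := measure_mono hsub
    _ = (μ.map Y) {y : ℝ | F y ≤ α} := (Measure.map_apply hYmeas hTmeas).symm
    _ = gaussianReal 0 v {y : ℝ | F y ≤ α} := by rw [hmapY]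
    _ ≤ ENNReal.ofReal α := cdf_superuniform _ α
end

section
/- Sequential rejection principle: Let V be a finite set of size n, let (p_v)_{v∈V} be random variables, and let π : V × 𝒫(V) → ℝ be a weight function. Define Ŝ₀ = ∅ and Ŝ_{i} = Ŝ_{i−1} ∪ {v : p_v ≤ π(v, Ŝ_{i−1})}, with final output Ŝ = Ŝ_n. Suppose S ⊆ V is such that (i) single-step condition: on some event E, p_v > π(v, S) for all v ∉ S; (ii) monotonicity: for every i and every outcome, if Ŝ_i ⊆ S then π(v, Ŝ_i) ≤ π(v, S) for all v ∉ S. Then on the event E, Ŝ ⊆ S. In particular, if P(E) ≥ 1 − α then P(Ŝ ⊆ S) ≥ 1 − α. -/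
open MeasureTheory

/-!
On `E`, induction on `i` shows `Ŝ_i ⊆ S`: if `Ŝ_i ⊆ S`, monotonicity gives
`π(v, Ŝ_i) ≤ π(v, S) < p_v` for every `v ∉ S`, so the next step rejects nothing outside `S`.
The probability bound is then monotonicity of the measure.
-/

section SequentialRejection

variable {V : Type*} [Fintype V] [DecidableEq V]

noncomputable def rejectionStep (p : V → ℝ) (π : V → Finset V → ℝ) (T : Finset V) : Finset V :=
  T ∪ Finset.univ.filter (fun v => p v ≤ π v T)

theorem rejectionStep_subset {p : V → ℝ} {π : V → Finset V → ℝ} {T S : Finset V}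
    (hTS : T ⊆ S) (hsingle : ∀ v ∉ S, π v S < p v) (hmono : ∀ v ∉ S, π v T ≤ π v S) :
    rejectionStep p π T ⊆ S := by
  refine Finset.union_subset hTS fun v hv => ?_
  by_contra hvS
  have hrejected : p v ≤ π v T := (Finset.mem_filter.mp hv).2
  exact (hrejected.trans (hmono v hvS)).not_gt (hsingle v hvS)

theorem iterate_rejectionStep_subset {p : V → ℝ} {π : V → Finset V → ℝ}
    {Shat : ℕ → Finset V} (h0 : Shat 0 = ∅) (hstep : ∀ i, Shat (i + 1) = rejectionStep p π (Shat i))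
    {S : Finset V} (hsingle : ∀ v ∉ S, π v S < p v)
    (hmono : ∀ i, Shat i ⊆ S → ∀ v ∉ S, π v (Shat i) ≤ π v S) (i : ℕ) :
    Shat i ⊆ S := by
  induction i with
  | zero => simp [h0]
  | succ i ih => exact hstep i ▸ rejectionStep_subset ih hsingle (hmono i ih)

end SequentialRejection

theorem stmt10_general
    {Ω : Type*} [MeasurableSpace Ω] (μ : Measure Ω)
    {V : Type*} [Fintype V] [DecidableEq V]
    (p : V → Ω → ℝ) (π : V → Finset V → ℝ)
    (Shat : ℕ → Ω → Finset V)
    (h0 : ∀ ω, Shat 0 ω = ∅)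
    (hstep : ∀ i ω, Shat (i + 1) ω =
      Shat i ω ∪ Finset.univ.filter (fun v => p v ω ≤ π v (Shat i ω)))
    (S : Finset V) (E : Set Ω)
    (hsingle : ∀ ω ∈ E, ∀ v ∉ S, π v S < p v ω)
    (hmono : ∀ i ω, Shat i ω ⊆ S → ∀ v ∉ S, π v (Shat i ω) ≤ π v S)
    (α : ℝ) :
    (∀ ω ∈ E, Shat (Fintype.card V) ω ⊆ S) ∧
      (1 - ENNReal.ofReal α ≤ μ E →
        1 - ENNReal.ofReal α ≤ μ {ω | Shat (Fintype.card V) ω ⊆ S}) := by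
  have hE_subset : ∀ ω ∈ E, Shat (Fintype.card V) ω ⊆ S := fun ω hω =>
    iterate_rejectionStep_subset (h0 ω) (fun i => hstep i ω) (hsingle ω hω)
      (fun i => hmono i ω) _
  exact ⟨hE_subset, fun hα => hα.trans (measure_mono hE_subset)⟩

/-- The sequential rejection principle: starting from the empty rejection set and
iteratively rejecting every hypothesis whose `p`-value falls below the current weight,
if the single-step condition holds on an event `E` and the weight function is monotone,
then on `E` the final rejection set after `n = |V|` steps is contained in `S`; in
particular, if `P(E) ≥ 1 - α` then `P(Ŝ ⊆ S) ≥ 1 - α`. -/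
theorem stmt10
    {Ω : Type*} [MeasurableSpace Ω] (μ : Measure Ω) [IsProbabilityMeasure μ]
    {V : Type*} [Fintype V] [DecidableEq V]
    (p : V → Ω → ℝ) (π : V → Finset V → ℝ)
    (Shat : ℕ → Ω → Finset V)
    (h0 : ∀ ω, Shat 0 ω = ∅)
    (hstep : ∀ i ω, Shat (i + 1) ω =
      Shat i ω ∪ Finset.univ.filter (fun v => p v ω ≤ π v (Shat i ω)))
    (S : Finset V) (E : Set Ω) (hE : MeasurableSet E)
    (hsingle : ∀ ω ∈ E, ∀ v ∉ S, π v S < p v ω)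
    (hmono : ∀ i ω, Shat i ω ⊆ S → ∀ v ∉ S, π v (Shat i ω) ≤ π v S)
    (α : ℝ) :
    (∀ ω ∈ E, Shat (Fintype.card V) ω ⊆ S) ∧
      (1 - ENNReal.ofReal α ≤ μ E →
        1 - ENNReal.ofReal α ≤ μ {ω | Shat (Fintype.card V) ω ⊆ S}) :=
  stmt10_general μ p π Shat h0 hstep S E hsingle hmono α
end

section
/- If a random vector (X₁,...,Xₙ) is stochastically increasing in a random variable Y (i.e., for every bounded coordinatewise-nondecreasing g, y ↦ E[g(X)|Y=y] is nondecreasing), and f₁,...,f_M : ℝⁿ → ℝ are coordinatewise nondecreasing with Y_j = f_j(X₁,...,Xₙ) for each j, and Y = Y_{j₀} for some index j₀, then (Y₁,...,Y_M) is PRDS on {j₀}: for every nondecreasing set D ⊆ ℝ^M, t ↦ P((Y₁,...,Y_M) ∈ D | Y_{j₀} = t) is nondecreasing. -/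
/-!
The vector `(f 1 (X), …, f M (X))` is the image of `X` under the monotone map
`F x = (f 1 x, …, f M x)`, so pushing the conditional law `κ` of `X` given `Y` forward along `F`
gives a conditional law of the vector given `Y`. Preimages of upper sets under `F` are upper sets,
and the indicator of an upper set is a bounded monotone function, so monotonicity of
`y ↦ ∫ g d(κ y)` yields monotonicity of the conditional probabilities of upper sets.
-/

open MeasureTheory ProbabilityTheory Set

namespace ProbabilityTheory.Kernel

variable {α β γ : Type*} {mα : MeasurableSpace α} {mβ : MeasurableSpace β}
  {mγ : MeasurableSpace γ} [Preorder α] [Preorder β] [Preorder γ]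

def IsStochasticallyMonotone (κ : Kernel α β) : Prop :=
  ∀ S : Set β, MeasurableSet S → IsUpperSet S → Monotone fun a => κ a S

lemma isStochasticallyMonotone_of_monotone_integral {κ : Kernel α β} [IsFiniteKernel κ]
    (hκ : ∀ g : β → ℝ, Measurable g → Monotone g → (∃ C, ∀ x, |g x| ≤ C) →
      Monotone fun a => ∫ x, g x ∂(κ a)) :
    κ.IsStochasticallyMonotone := by
  intro S hS hSupper a b hab
  have hmono : Monotone (S.indicator (1 : β → ℝ)) := by
    intro x y hxy
    by_cases hx : x ∈ S
    · simp [hx, hSupper hxy hx]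
    · simp [hx, indicator_nonneg]
  have hbdd : ∃ C, ∀ x, |S.indicator (1 : β → ℝ) x| ≤ C :=
    ⟨1, fun x => by by_cases hx : x ∈ S <;> simp [hx]⟩
  have h := hκ _ (measurable_one.indicator hS) hmono hbdd hab
  simp only [integral_indicator_one hS, measureReal_def] at h
  exact (ENNReal.toReal_le_toReal (measure_ne_top _ _) (measure_ne_top _ _)).mp h

lemma IsStochasticallyMonotone.map {κ : Kernel α β} (hκ : κ.IsStochasticallyMonotone)
    {F : β → γ} (hFm : Measurable F) (hF : Monotone F) :
    (κ.map F).IsStochasticallyMonotone := by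
  intro S hS hSupper
  simp only [map_apply' κ hFm _ hS]
  exact hκ _ (hFm hS) (hSupper.preimage hF)

end ProbabilityTheory.Kernel

namespace MeasureTheory.Measure

variable {α β γ Ω : Type*} {mα : MeasurableSpace α} {mβ : MeasurableSpace β}
  {mγ : MeasurableSpace γ} {mΩ : MeasurableSpace Ω}

lemma compProd_map' (μ : Measure α) (κ : Kernel α β) [IsSFiniteKernel κ]
    {f : β → γ} (hf : Measurable f) :
    μ ⊗ₘ κ.map f = (μ ⊗ₘ κ).map (Prod.map id f) := by
  by_cases hμ : SFinite μ
  · exact compProd_map hf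
  · simp [hμ]

lemma map_prodMk_comp_eq_compProd_map {μ : Measure Ω} {Y : Ω → α} {X : Ω → β}
    (hY : Measurable Y) (hX : Measurable X) {κ : Kernel α β} [IsSFiniteKernel κ]
    (hκ : μ.map (fun ω => (Y ω, X ω)) = μ.map Y ⊗ₘ κ) {F : β → γ} (hF : Measurable F) :
    μ.map (fun ω => (Y ω, F (X ω))) = μ.map Y ⊗ₘ κ.map F := by
  rw [compProd_map' _ _ hF, ← hκ,
    map_map (measurable_id.prodMap hF) (hY.prodMk hX)]
  rfl

end MeasureTheory.Measure

theorem stmt12_general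
    {Ω : Type*} [MeasurableSpace Ω] (μ : Measure Ω)
    (n M : ℕ) (X : Ω → (Fin n → ℝ)) (hX : Measurable X)
    (f : Fin M → (Fin n → ℝ) → ℝ)
    (hfm : ∀ j, Measurable (f j)) (hfmono : ∀ j, Monotone (f j))
    (j₀ : Fin M)
    (κ : Kernel ℝ (Fin n → ℝ)) [IsMarkovKernel κ]
    (hκ : μ.map (fun ω => (f j₀ (X ω), X ω)) = (μ.map (fun ω => f j₀ (X ω))) ⊗ₘ κ)
    (hκmono : ∀ g : (Fin n → ℝ) → ℝ, Measurable g → Monotone g → (∃ C, ∀ x, |g x| ≤ C) →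
      Monotone (fun y => ∫ x, g x ∂(κ y))) :
    ∃ η : Kernel ℝ (Fin M → ℝ), IsMarkovKernel η ∧
      μ.map (fun ω => (f j₀ (X ω), fun j => f j (X ω))) =
        (μ.map (fun ω => f j₀ (X ω))) ⊗ₘ η ∧
      ∀ D : Set (Fin M → ℝ), MeasurableSet D → IsUpperSet D →
        Monotone (fun t => η t D) := by
  let F : (Fin n → ℝ) → (Fin M → ℝ) := fun x j => f j x
  have hFm : Measurable F := measurable_pi_lambda _ hfm
  have hF : Monotone F := fun _ _ hxy j => hfmono j hxy
  refine ⟨κ.map F, Kernel.IsMarkovKernel.map κ hFm,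
    Measure.map_prodMk_comp_eq_compProd_map ((hfm j₀).comp hX) hX hκ hFm, ?_⟩
  exact (Kernel.isStochasticallyMonotone_of_monotone_integral hκmono).map hFm hF

/-- If the random vector `X` is stochastically increasing in `Y = f j₀ (X)` (expressed via
a conditional-distribution kernel `κ` of `X` given `Y` that is stochastically monotone),
and each `f j` is coordinatewise nondecreasing, then `(f 1 (X), ..., f M (X))` is PRDS on
`{j₀}`: there is a version of the conditional distribution of the vector given its `j₀`-th
coordinate that assigns monotonically increasing probability to every upper set. -/
theorem stmt12
    {Ω : Type*} [MeasurableSpace Ω] (μ : Measure Ω) [IsProbabilityMeasure μ]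
    (n M : ℕ) (X : Ω → (Fin n → ℝ)) (hX : Measurable X)
    (f : Fin M → (Fin n → ℝ) → ℝ)
    (hfm : ∀ j, Measurable (f j)) (hfmono : ∀ j, Monotone (f j))
    (j₀ : Fin M)
    (κ : Kernel ℝ (Fin n → ℝ)) [IsMarkovKernel κ]
    (hκ : μ.map (fun ω => (f j₀ (X ω), X ω)) = (μ.map (fun ω => f j₀ (X ω))) ⊗ₘ κ)
    (hκmono : ∀ g : (Fin n → ℝ) → ℝ, Measurable g → Monotone g → (∃ C, ∀ x, |g x| ≤ C) →
      Monotone (fun y => ∫ x, g x ∂(κ y))) :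
    ∃ η : Kernel ℝ (Fin M → ℝ), IsMarkovKernel η ∧
      μ.map (fun ω => (f j₀ (X ω), fun j => f j (X ω))) =
        (μ.map (fun ω => f j₀ (X ω))) ⊗ₘ η ∧
      ∀ D : Set (Fin M → ℝ), MeasurableSet D → IsUpperSet D →
        Monotone (fun t => η t D) :=
  stmt12_general μ n M X hX f hfm hfmono j₀ κ hκ hκmono
end

section
/- Efron's theorem (n = 2, Gaussian case): Let X₁, X₂ be independent standard normal random variables and S = X₁ + X₂. Then for every bounded coordinatewise-nondecreasing function g : ℝ² → ℝ, the map s ↦ E[g(X₁, X₂) | X₁ + X₂ = s] is nondecreasing. -/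
/-!
The sum `S = X₁ + X₂` and the difference `D = X₁ - X₂` are jointly Gaussian and uncorrelated
(since `Var X₁ = Var X₂`), hence independent. Writing `(X₁, X₂) = ((S + D) / 2, (S - D) / 2)`,
the conditional law of `(X₁, X₂)` given `S = s` is therefore the law of
`((s + D) / 2, (s - D) / 2)`, which increases coordinatewise in `s` for every value of `D`.
-/

open MeasureTheory ProbabilityTheory

namespace ProbabilityTheory

section SectionKernel

variable {α β γ : Type*} [MeasurableSpace α] [MeasurableSpace β] [MeasurableSpace γ]

noncomputable def sectionKernel (ν : Measure β) (F : α × β → γ) : Kernel α γ :=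
  (Kernel.id ×ₖ Kernel.const α ν).map F

variable {ν : Measure β} {F : α × β → γ}

instance [SFinite ν] : IsSFiniteKernel (sectionKernel ν F) :=
  Kernel.IsSFiniteKernel.map _ F

lemma isMarkovKernel_sectionKernel [IsProbabilityMeasure ν] (hF : Measurable F) :
    IsMarkovKernel (sectionKernel ν F) :=
  Kernel.IsMarkovKernel.map _ hF

lemma sectionKernel_apply [SFinite ν] (hF : Measurable F) (a : α) :
    sectionKernel ν F a = ν.map (fun b => F (a, b)) := by
  rw [sectionKernel, Kernel.map_apply _ hF, Kernel.prod_apply, Kernel.id_apply,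
    Kernel.const_apply, Measure.dirac_prod, Measure.map_map hF measurable_prodMk_left]
  rfl

lemma integral_sectionKernel [SFinite ν] (hF : Measurable F) {g : γ → ℝ} (hg : Measurable g)
    (a : α) : ∫ x, g x ∂(sectionKernel ν F a) = ∫ b, g (F (a, b)) ∂ν := by
  rw [sectionKernel_apply hF, integral_map (by fun_prop) hg.aestronglyMeasurable]

lemma map_prod_eq_compProd_sectionKernel (μ : Measure α) [SFinite μ] [SFinite ν]
    (hF : Measurable F) :
    (μ.prod ν).map (fun p => (p.1, F p)) = μ ⊗ₘ sectionKernel ν F := by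
  ext B hB
  rw [Measure.map_apply (by fun_prop) hB, Measure.prod_apply (by measurability),
    Measure.compProd_apply hB]
  refine lintegral_congr fun a => ?_
  rw [sectionKernel_apply hF, Measure.map_apply (by fun_prop) (measurable_prodMk_left hB)]
  rfl

end SectionKernel

lemma IndepFun.indepFun_add_sub {Ω : Type*} [MeasurableSpace Ω] {μ : Measure Ω} {X Y : Ω → ℝ}
    (hX : HasGaussianLaw X μ) (hY : HasGaussianLaw Y μ) (hXY : IndepFun X Y μ)
    (hvar : Var[X; μ] = Var[Y; μ]) :
    IndepFun (fun ω => X ω + Y ω) (fun ω => X ω - Y ω) μ := by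
  have := hX.isProbabilityMeasure
  let L : ℝ × ℝ →L[ℝ] ℝ × ℝ :=
    (ContinuousLinearMap.fst ℝ ℝ ℝ + ContinuousLinearMap.snd ℝ ℝ ℝ).prod
      (ContinuousLinearMap.fst ℝ ℝ ℝ - ContinuousLinearMap.snd ℝ ℝ ℝ)
  have hjoint : HasGaussianLaw (fun ω => (X ω + Y ω, X ω - Y ω)) μ :=
    (hXY.hasGaussianLaw hX hY).map_fun L
  refine hjoint.indepFun_of_covariance_eq_zero ?_
  change cov[X + Y, X - Y; μ] = 0
  have h2X := hX.memLp_two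
  have h2Y := hY.memLp_two
  rw [covariance_add_left h2X h2Y (h2X.sub h2Y), covariance_sub_right h2X h2X h2Y,
    covariance_sub_right h2Y h2X h2Y, covariance_self hX.aemeasurable,
    covariance_self hY.aemeasurable, covariance_comm X Y, hvar]
  ring

end ProbabilityTheory

lemma MeasureTheory.monotone_integral_of_forall_monotone {α β : Type*} [Preorder α]
    [MeasurableSpace β] {ν : Measure β} {f : α → β → ℝ} (hf : ∀ a, Integrable (f a) ν)
    (hmono : ∀ b, Monotone (f · b)) : Monotone fun a => ∫ b, f a b ∂ν :=
  fun _ _ h => integral_mono (hf _) (hf _) fun b => hmono b h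

/-- Efron's theorem (`n = 2`, Gaussian case): if `X₁, X₂` are independent standard normal
random variables and `S = X₁ + X₂`, then `(X₁, X₂)` is stochastically increasing in `S`:
there is a version `η` of the conditional distribution of `(X₁, X₂)` given `S` such that
for every bounded coordinatewise-nondecreasing measurable `g`, the map
`s ↦ E[g(X₁, X₂) | S = s] = ∫ g dη(s)` is nondecreasing. -/
theorem stmt13
    {Ω : Type*} [MeasurableSpace Ω] (μ : Measure Ω) [IsProbabilityMeasure μ]
    (X₁ X₂ : Ω → ℝ) (h1 : Measurable X₁) (h2 : Measurable X₂)
    (hindep : IndepFun X₁ X₂ μ)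
    (hd1 : μ.map X₁ = gaussianReal 0 1) (hd2 : μ.map X₂ = gaussianReal 0 1) :
    ∃ η : Kernel ℝ (ℝ × ℝ), IsMarkovKernel η ∧
      μ.map (fun ω => (X₁ ω + X₂ ω, (X₁ ω, X₂ ω))) =
        (μ.map (fun ω => X₁ ω + X₂ ω)) ⊗ₘ η ∧
      ∀ g : ℝ × ℝ → ℝ, Measurable g → Monotone g → (∃ C, ∀ x, |g x| ≤ C) →
        Monotone (fun s => ∫ x, g x ∂(η s)) := by
  have hF : Measurable fun p : ℝ × ℝ => ((p.1 + p.2) / 2, (p.1 - p.2) / 2) := by fun_prop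
  have hSD : IndepFun (fun ω => X₁ ω + X₂ ω) (fun ω => X₁ ω - X₂ ω) μ := by
    refine hindep.indepFun_add_sub (HasLaw.mk h1.aemeasurable hd1).hasGaussianLaw
      (HasLaw.mk h2.aemeasurable hd2).hasGaussianLaw ?_
    rw [← variance_id_map h1.aemeasurable, ← variance_id_map h2.aemeasurable, hd1, hd2]
  have := Measure.isProbabilityMeasure_map (μ := μ) (f := fun ω => X₁ ω - X₂ ω) (by fun_prop)
  refine ⟨sectionKernel (μ.map fun ω => X₁ ω - X₂ ω) _, isMarkovKernel_sectionKernel hF, ?_, ?_⟩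
  · have hX : (fun ω => (X₁ ω + X₂ ω, (X₁ ω, X₂ ω))) =
        (fun p : ℝ × ℝ => (p.1, ((p.1 + p.2) / 2, (p.1 - p.2) / 2))) ∘
          fun ω => (X₁ ω + X₂ ω, X₁ ω - X₂ ω) := by
      funext ω; simp only [Function.comp_apply, Prod.mk.injEq, true_and]; constructor <;> ring
    rw [hX, ← Measure.map_map (by fun_prop) (by fun_prop),
      (indepFun_iff_map_prod_eq_prod_map_map (by fun_prop) (by fun_prop)).mp hSD,
      map_prod_eq_compProd_sectionKernel _ hF]
  · rintro g hg hmono ⟨C, hC⟩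
    simp_rw [integral_sectionKernel hF hg]
    refine monotone_integral_of_forall_monotone (fun s => Integrable.of_bound
      (hg.comp (hF.comp measurable_prodMk_left)).aestronglyMeasurable C (ae_of_all _ fun v => hC _))
      fun v s t hst => hmono (Prod.mk_le_mk.mpr ⟨?_, ?_⟩) <;> linarith
end
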